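/- Under rPGD for orthogonal A (AAᵀ = I) in Phase I with fixed g: if 0 < g_0 < g* and w_0 is a unit vector, then with η_t = 1/g_0² and γ_t = 0, for all t ≥ 0: ‖w_{t+1}^⊥‖² ≤ (g_0²/(g*)²)·‖w_t^⊥‖², and hence after T_1 = log(1/ε²)/log((g*)²/g_0²) iterations, ‖w_{T_1}^⊥‖² ≤ ε². -/

import Mathlib

/-!
Since `A Aᵀ = I`, `AᵀA` is the orthogonal projection onto the row space `(ker A)ᗮ`, which
contains `w*`. Hence the gradient step is `v = w^⊥ + (g*/g₀) w*` with orthogonal summands, and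
normalizing only rescales `w^⊥`, by `1/‖v‖ ≤ g₀/g*`. So `‖w^⊥‖²` contracts by `g₀²/g*²` per step
starting from `‖w₀^⊥‖² ≤ ‖w₀‖² = 1`, and `T₁` is exactly the number of steps after which
`(g₀²/g*²)^T₁ ≤ ε²`.
-/

open ContinuousLinearMap Real

namespace ContinuousLinearMap

variable {𝕜 E F : Type*} [RCLike 𝕜] [NormedAddCommGroup E] [InnerProductSpace 𝕜 E]
  [CompleteSpace E] [NormedAddCommGroup F] [InnerProductSpace 𝕜 F] [CompleteSpace F]

/-- The paper's `w ↦ w^⊥ = (I − AᵀA)w`; when `A Aᵀ = I` it is the orthogonal projection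
onto `ker A`. -/
noncomputable def kerProj (A : E →L[𝕜] F) : E →L[𝕜] E := .id 𝕜 E - adjoint A ∘L A

theorem kerProj_apply (A : E →L[𝕜] F) (x : E) : kerProj A x = x - adjoint A (A x) := rfl

theorem adjoint_apply_mem_orthogonal_ker (A : E →L[𝕜] F) (y : F) :
    adjoint A y ∈ (LinearMap.ker A.toLinearMap)ᗮ := by
  intro z (hz : A z = 0)
  rw [adjoint_inner_right, hz, inner_zero_left]

variable {A : E →L[𝕜] F}

theorem apply_adjoint_apply_of_comp_adjoint_eq_id (hA : A ∘L adjoint A = .id 𝕜 F) (y : F) :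
    A (adjoint A y) = y :=
  congr($hA y)

theorem kerProj_mem_ker (hA : A ∘L adjoint A = .id 𝕜 F) (x : E) :
    kerProj A x ∈ LinearMap.ker A.toLinearMap := by
  simp [kerProj_apply, apply_adjoint_apply_of_comp_adjoint_eq_id hA]

theorem kerProj_eq_zero_of_mem_orthogonal_ker (hA : A ∘L adjoint A = .id 𝕜 F) {x : E}
    (hx : x ∈ (LinearMap.ker A.toLinearMap)ᗮ) : kerProj A x = 0 :=
  Submodule.disjoint_def.mp (Submodule.orthogonal_disjoint _) _ (kerProj_mem_ker hA x)
    (Submodule.sub_mem _ hx (adjoint_apply_mem_orthogonal_ker A _))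

theorem kerProj_kerProj (hA : A ∘L adjoint A = .id 𝕜 F) (x : E) :
    kerProj A (kerProj A x) = kerProj A x := by
  have hker : A (kerProj A x) = 0 := kerProj_mem_ker hA x
  rw [kerProj_apply _ (kerProj A x), hker, map_zero, sub_zero]

theorem inner_kerProj_eq_zero_of_mem_orthogonal_ker (hA : A ∘L adjoint A = .id 𝕜 F) (x : E)
    {y : E} (hy : y ∈ (LinearMap.ker A.toLinearMap)ᗮ) : inner 𝕜 (kerProj A x) y = 0 :=
  Submodule.inner_right_of_mem_orthogonal (kerProj_mem_ker hA x) hy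

theorem norm_kerProj_le (hA : A ∘L adjoint A = .id 𝕜 F) (x : E) : ‖kerProj A x‖ ≤ ‖x‖ := by
  have hpyth := norm_add_sq_eq_norm_sq_add_norm_sq_of_inner_eq_zero _ _
    (inner_kerProj_eq_zero_of_mem_orthogonal_ker hA x (adjoint_apply_mem_orthogonal_ker A (A x)))
  rw [kerProj_apply, sub_add_cancel] at hpyth
  refine (mul_self_le_mul_self_iff (norm_nonneg _) (norm_nonneg _)).mpr ?_
  rw [kerProj_apply, hpyth]
  exact le_add_of_nonneg_right (mul_self_nonneg _)

end ContinuousLinearMap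

theorem norm_inv_norm_add_smul_sq_le {E : Type*} [NormedAddCommGroup E] [InnerProductSpace ℝ E]
    {p u : E} (h : inner ℝ p u = 0) (hu : u ≠ 0) : ‖‖p + u‖⁻¹ • p‖ ^ 2 ≤ ‖p‖ ^ 2 / ‖u‖ ^ 2 := by
  have hpyth : ‖p + u‖ ^ 2 = ‖p‖ ^ 2 + ‖u‖ ^ 2 := by
    rw [norm_add_sq_real, h]; ring
  calc ‖‖p + u‖⁻¹ • p‖ ^ 2 = ‖p‖ ^ 2 / (‖p‖ ^ 2 + ‖u‖ ^ 2) := by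
        rw [norm_smul, norm_inv, norm_norm, mul_pow, inv_pow, hpyth, inv_mul_eq_div]
    _ ≤ ‖p‖ ^ 2 / ‖u‖ ^ 2 :=
        div_le_div_of_nonneg_left (sq_nonneg _) (pow_pos (norm_pos_iff.mpr hu) 2)
          (le_add_of_nonneg_left (sq_nonneg _))

section gradStep

variable {E F : Type*} [NormedAddCommGroup E] [InnerProductSpace ℝ E] [CompleteSpace E]
  [NormedAddCommGroup F] [InnerProductSpace ℝ F] [CompleteSpace F]

/-- The gradient step `w − η ∇_w ½‖A(g₀ w) − y‖²` with `η = 1/g₀²` and `y = A(g* w*)`. -/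
noncomputable def gradStep (A : E →L[ℝ] F) (g₀ gstar : ℝ) (wstar x : E) : E :=
  x - g₀⁻¹ • adjoint A (A (g₀ • x - gstar • wstar))

variable {A : E →L[ℝ] F} {g₀ gstar : ℝ} {wstar : E}

theorem gradStep_eq (hA : A ∘L adjoint A = .id ℝ F)
    (hwstar : wstar ∈ (LinearMap.ker A.toLinearMap)ᗮ) (hg₀ : g₀ ≠ 0) (x : E) :
    gradStep A g₀ gstar wstar x = kerProj A x + (gstar / g₀) • wstar := by
  have hproj : adjoint A (A wstar) = wstar :=
    (sub_eq_zero.mp (kerProj_eq_zero_of_mem_orthogonal_ker hA hwstar)).symm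
  simp only [gradStep, kerProj_apply, map_sub, map_smul, hproj]
  match_scalars <;> field_simp

theorem norm_kerProj_normalize_gradStep_sq_le (hA : A ∘L adjoint A = .id ℝ F)
    (hwstar : wstar ∈ (LinearMap.ker A.toLinearMap)ᗮ) (hwstar_norm : ‖wstar‖ = 1)
    (hg₀ : g₀ ≠ 0) (hgstar : gstar ≠ 0) (x : E) :
    ‖kerProj A (‖gradStep A g₀ gstar wstar x‖⁻¹ • gradStep A g₀ gstar wstar x)‖ ^ 2 ≤
      g₀ ^ 2 / gstar ^ 2 * ‖kerProj A x‖ ^ 2 := by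
  have hstar : kerProj A ((gstar / g₀) • wstar) = 0 := by
    rw [map_smul, kerProj_eq_zero_of_mem_orthogonal_ker hA hwstar, smul_zero]
  have horth : inner ℝ (kerProj A x) ((gstar / g₀) • wstar) = 0 := by
    rw [real_inner_smul_right, inner_kerProj_eq_zero_of_mem_orthogonal_ker hA x hwstar, mul_zero]
  have hu : ‖(gstar / g₀) • wstar‖ ^ 2 = gstar ^ 2 / g₀ ^ 2 := by
    rw [norm_smul, hwstar_norm, mul_one, Real.norm_eq_abs, sq_abs, div_pow]
  rw [gradStep_eq hA hwstar hg₀, map_smul, map_add, kerProj_kerProj hA, hstar, add_zero]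
  calc _ ≤ ‖kerProj A x‖ ^ 2 / ‖(gstar / g₀) • wstar‖ ^ 2 :=
        norm_inv_norm_add_smul_sq_le horth (by simp [hg₀, hgstar, ← norm_ne_zero_iff, hwstar_norm])
    _ = g₀ ^ 2 / gstar ^ 2 * ‖kerProj A x‖ ^ 2 := by rw [hu]; field_simp

end gradStep

theorem pow_le_of_log_div_log_le {r y : ℝ} (hr₀ : 0 < r) (hr₁ : r < 1) (hy : 0 < y) {T : ℕ}
    (hT : log (1 / y) / log (1 / r) ≤ T) : r ^ T ≤ y := by
  have hlog : 0 < log (1 / r) := log_pos (one_lt_one_div hr₀ hr₁)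
  rw [div_le_iff₀ hlog, one_div, one_div, log_inv, log_inv] at hT
  exact (pow_le_iff_le_log hr₀ hy).mpr (by linarith)

/-- Phase I of rPGD for orthogonal `A` (`AAᵀ = I`), with fixed scale
`g = g_0` (`0 < g_0 < g*`), stepsize `η = 1/g_0²`, `γ = 0`, unit `w_0`: writing
`w^⊥ = (I − AᵀA)w`, one has `‖w_{t+1}^⊥‖² ≤ (g_0²/(g*)²)·‖w_t^⊥‖²` for all `t`, and
hence `‖w_{T₁}^⊥‖² ≤ ε²` after `T₁ = log(1/ε²)/log((g*)²/g_0²)` iterations. -/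
theorem stmt19 (m d : ℕ)
    (A : EuclideanSpace ℝ (Fin d) →L[ℝ] EuclideanSpace ℝ (Fin m))
    (hA : A.comp (ContinuousLinearMap.adjoint A) =
      ContinuousLinearMap.id ℝ (EuclideanSpace ℝ (Fin m)))
    (gstar g0 : ℝ) (hg0 : 0 < g0) (hg0lt : g0 < gstar)
    (wstar : EuclideanSpace ℝ (Fin d)) (hws : ‖wstar‖ = 1)
    (hwsrow : wstar ∈ (LinearMap.ker A.toLinearMap)ᗮ)
    (w : ℕ → EuclideanSpace ℝ (Fin d))
    (v : ℕ → EuclideanSpace ℝ (Fin d))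
    (hw0 : ‖w 0‖ = 1)
    (hv : ∀ t, v t = w t -
      g0⁻¹ • (ContinuousLinearMap.adjoint A) (A (g0 • w t - gstar • wstar)))
    (hrec : ∀ t, w (t + 1) = ‖v t‖⁻¹ • v t) :
    (∀ t : ℕ,
      ‖w (t + 1) - (ContinuousLinearMap.adjoint A) (A (w (t + 1)))‖^2 ≤
        (g0^2 / gstar^2) * ‖w t - (ContinuousLinearMap.adjoint A) (A (w t))‖^2) ∧
    (∀ ε : ℝ, 0 < ε → ∀ T₁ : ℕ,
      Real.log (1 / ε^2) / Real.log (gstar^2 / g0^2) ≤ (T₁ : ℝ) →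
      ‖w T₁ - (ContinuousLinearMap.adjoint A) (A (w T₁))‖^2 ≤ ε^2) := by
  have hgstar : 0 < gstar := hg0.trans hg0lt
  have hcontract (t : ℕ) :
      ‖kerProj A (w (t + 1))‖ ^ 2 ≤ g0 ^ 2 / gstar ^ 2 * ‖kerProj A (w t)‖ ^ 2 := by
    rw [hrec t, hv t]
    exact norm_kerProj_normalize_gradStep_sq_le hA hwsrow hws hg0.ne' hgstar.ne' (w t)
  refine ⟨hcontract, fun ε hε T₁ hT₁ => ?_⟩
  have hratio : g0 ^ 2 / gstar ^ 2 < 1 := by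
    rw [div_lt_one (by positivity)]
    exact pow_lt_pow_left₀ hg0lt hg0.le two_ne_zero
  have hinit : ‖kerProj A (w 0)‖ ^ 2 ≤ 1 := by
    simpa [hw0] using pow_le_pow_left₀ (norm_nonneg _) (norm_kerProj_le hA (w 0)) 2
  calc ‖kerProj A (w T₁)‖ ^ 2 ≤ (g0 ^ 2 / gstar ^ 2) ^ T₁ * ‖kerProj A (w 0)‖ ^ 2 :=
        le_geom (u := fun t => ‖kerProj A (w t)‖ ^ 2) (by positivity) T₁ fun k _ =>
          hcontract k
    _ ≤ (g0 ^ 2 / gstar ^ 2) ^ T₁ := mul_le_of_le_one_right (by positivity) hinit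
    _ ≤ ε ^ 2 := pow_le_of_log_div_log_le (by positivity) hratio (by positivity)
        (by rwa [one_div_div])
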